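/- arXiv:0912.0723 — 4 statements merged into one kernel-verified Lean document; each statement's English description precedes it below -/
import Mathlib

section
/- For every n ≥ 1, the ring I_n is neither left Noetherian nor right Noetherian. -/
open MvPolynomial

set_option synthInstance.maxHeartbeats 1000000
set_option maxHeartbeats 1000000

/-- Multiplication by `x_i`, as a `K`-linear endomorphism of `K[x_1,…,x_n]`. -/
noncomputable def xOp (K : Type*) [Field K] (n : ℕ) (i : Fin n) :
    Module.End K (MvPolynomial (Fin n) K) :=
  LinearMap.mulLeft K (X i)

/-- The formal partial derivative `∂/∂x_i`. -/
noncomputable def dOp (K : Type*) [Field K] (n : ℕ) (i : Fin n) :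
    Module.End K (MvPolynomial (Fin n) K) :=
  (pderiv i).toLinearMap

/-- The integration operator `∫_i`, determined by `∫_i(x^α) = x^α·x_i/(α_i+1)`. -/
noncomputable def intOp (K : Type*) [Field K] (n : ℕ) (i : Fin n) :
    Module.End K (MvPolynomial (Fin n) K) :=
  (basisMonomials (Fin n) K).constr K
    (fun α => (((α i : ℕ) : K) + 1)⁻¹ • (monomial (α + Finsupp.single i 1) (1 : K)))

/-- The algebra `I_n` of polynomial integro-differential operators:
the `K`-subalgebra of `End_K(P_n)` generated by the `X_i`, `∂_i` and `∫_i`. -/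
noncomputable def IDO (K : Type*) [Field K] (n : ℕ) :
    Subalgebra K (Module.End K (MvPolynomial (Fin n) K)) :=
  Algebra.adjoin K (Set.range (xOp K n) ∪ Set.range (dOp K n) ∪ Set.range (intOp K n))

/-- `X_i` as an element of `I_n`. -/
noncomputable def xElt (K : Type*) [Field K] (n : ℕ) (i : Fin n) : IDO K n :=
  ⟨xOp K n i, Algebra.subset_adjoin (Or.inl (Or.inl ⟨i, rfl⟩))⟩

/-- `∂_i` as an element of `I_n`. -/
noncomputable def dElt (K : Type*) [Field K] (n : ℕ) (i : Fin n) : IDO K n :=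
  ⟨dOp K n i, Algebra.subset_adjoin (Or.inl (Or.inr ⟨i, rfl⟩))⟩

/-- `∫_i` as an element of `I_n`. -/
noncomputable def intElt (K : Type*) [Field K] (n : ℕ) (i : Fin n) : IDO K n :=
  ⟨intOp K n i, Algebra.subset_adjoin (Or.inr ⟨i, rfl⟩)⟩

/-- The "matrix unit" `e_{jj} = ∫^j (1 - ∫∂) ∂^j`, defined recursively. -/
noncomputable def Ejj (K : Type*) [Field K] (n : ℕ) (i : Fin n) : ℕ → IDO K n
  | 0 => 1 - intElt K n i * dElt K n i
  | (j + 1) => intElt K n i * Ejj K n i j * dElt K n i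

section Aux

variable {K : Type*} [Field K] {n : ℕ} (i : Fin n)

lemma intOp_monomial_one (α : Fin n →₀ ℕ) :
    intOp K n i (monomial α (1 : K)) =
      (((α i : ℕ) : K) + 1)⁻¹ • monomial (α + Finsupp.single i 1) (1 : K) := by
  have h : monomial α (1 : K) = basisMonomials (Fin n) K α := by
    rw [coe_basisMonomials]
  rw [h, intOp, Module.Basis.constr_basis]

lemma dOp_monomial_one (α : Fin n →₀ ℕ) :
    dOp K n i (monomial α (1 : K)) =
      ((α i : ℕ) : K) • monomial (α - Finsupp.single i 1) (1 : K) := by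
  simp [dOp, pderiv_monomial, smul_monomial]

lemma sub_single_apply (α : Fin n →₀ ℕ) (m : ℕ) (hα : α i = m + 1) :
    ((α - Finsupp.single i 1 : Fin n →₀ ℕ)) i = m := by
  rw [Finsupp.tsub_apply, Finsupp.single_eq_same, hα]
  omega

variable [CharZero K]

lemma Ejj_monomial (j : ℕ) (α : Fin n →₀ ℕ) :
    ((Ejj K n i j : IDO K n) : Module.End K (MvPolynomial (Fin n) K)) (monomial α (1 : K)) =
      if α i = j then monomial α (1 : K) else 0 := by
  induction j generalizing α with
  | zero =>
    show ((1 - intElt K n i * dElt K n i : IDO K n) :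
        Module.End K (MvPolynomial (Fin n) K)) (monomial α 1) = _
    rcases Nat.eq_zero_or_eq_succ_pred (α i) with h0 | hs
    · simp only [h0, if_pos rfl]
      simp [LinearMap.sub_apply, Module.End.mul_apply, intElt, dElt,
        dOp_monomial_one, h0]
    · set m := (α i).pred
      have hα : α i = m + 1 := hs
      have hβ : ((α - Finsupp.single i 1 : Fin n →₀ ℕ)) i = m := sub_single_apply i α m hα
      have hba : (α - Finsupp.single i 1) + Finsupp.single i 1 = α :=
        tsub_add_cancel_of_le (Finsupp.single_le_iff.mpr (by omega))
      have hne : ((m : K) + 1) ≠ 0 := Nat.cast_add_one_ne_zero m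
      have : ((1 - intElt K n i * dElt K n i : IDO K n) :
          Module.End K (MvPolynomial (Fin n) K)) (monomial α 1) = 0 := by
        simp only [Subalgebra.coe_sub, OneMemClass.coe_one, MulMemClass.coe_mul,
          LinearMap.sub_apply, Module.End.one_apply, Module.End.mul_apply,
          intElt, dElt]
        rw [dOp_monomial_one, map_smul, intOp_monomial_one, hβ, hba, hα]
        rw [smul_smul]
        push_cast
        rw [mul_inv_cancel₀ hne, one_smul, sub_self]
      rw [this, if_neg (by omega)]
  | succ j ih =>
    show ((intElt K n i * Ejj K n i j * dElt K n i : IDO K n) :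
        Module.End K (MvPolynomial (Fin n) K)) (monomial α 1) = _
    simp only [MulMemClass.coe_mul, Module.End.mul_apply, intElt, dElt]
    rcases Nat.eq_zero_or_eq_succ_pred (α i) with h0 | hs
    · rw [dOp_monomial_one, h0]
      simp only [Nat.cast_zero, zero_smul, map_zero]
      rw [if_neg (by omega)]
    · set m := (α i).pred
      have hα : α i = m + 1 := hs
      have hβ : ((α - Finsupp.single i 1 : Fin n →₀ ℕ)) i = m := sub_single_apply i α m hα
      have hba : (α - Finsupp.single i 1) + Finsupp.single i 1 = α :=
        tsub_add_cancel_of_le (Finsupp.single_le_iff.mpr (by omega))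
      rw [dOp_monomial_one, hα, map_smul, ih]
      by_cases hmj : m = j
      · rw [if_pos (by rw [hβ, hmj]), if_pos (by omega), map_smul,
          intOp_monomial_one, hβ, hba, smul_smul]
        push_cast
        rw [mul_inv_cancel₀ (Nat.cast_add_one_ne_zero m), one_smul]
      · rw [if_neg (by rw [hβ]; exact hmj), if_neg (by omega), smul_zero, map_zero]

lemma Ejj_coeff_eq_zero (j : ℕ) (q : MvPolynomial (Fin n) K) (β : Fin n →₀ ℕ)
    (h : β i ≠ j) :
    coeff β (((Ejj K n i j : IDO K n) : Module.End K (MvPolynomial (Fin n) K)) q) = 0 := by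
  have key : (lcoeff K β).comp
      ((Ejj K n i j : IDO K n) : Module.End K (MvPolynomial (Fin n) K)) = 0 := by
    apply (basisMonomials (Fin n) K).ext
    intro α
    simp only [coe_basisMonomials, LinearMap.comp_apply, LinearMap.zero_apply, lcoeff_apply]
    rw [Ejj_monomial]
    split_ifs with hij
    · rw [coeff_monomial, if_neg]
      rintro rfl
      exact h hij
    · exact coeff_zero β
  calc coeff β (((Ejj K n i j : IDO K n) : Module.End K (MvPolynomial (Fin n) K)) q)
      = ((lcoeff K β).comp
        ((Ejj K n i j : IDO K n) : Module.End K (MvPolynomial (Fin n) K))) q := rfl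
    _ = 0 := by rw [key]; rfl

/-- Left ideal of operators killing a given polynomial. -/
noncomputable def lkiller (p : MvPolynomial (Fin n) K) :
    Submodule (IDO K n) (IDO K n) where
  carrier := {T | (T : Module.End K (MvPolynomial (Fin n) K)) p = 0}
  add_mem' := by
    intro a b ha hb
    show ((a + b : IDO K n) : Module.End K (MvPolynomial (Fin n) K)) p = 0
    rw [Subalgebra.coe_add, LinearMap.add_apply, ha, hb, add_zero]
  zero_mem' := by
    show ((0 : IDO K n) : Module.End K (MvPolynomial (Fin n) K)) p = 0
    simp
  smul_mem' := by
    intro c T hT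
    show ((c • T : IDO K n) : Module.End K (MvPolynomial (Fin n) K)) p = 0
    rw [smul_eq_mul, MulMemClass.coe_mul, Module.End.mul_apply, hT, map_zero]

/-- Right ideal (as a submodule over the opposite ring) of operators whose image lies in
polynomials of `x_i`-degree at most `k`. -/
noncomputable def rkiller (k : ℕ) : Submodule (IDO K n)ᵐᵒᵖ (IDO K n)ᵐᵒᵖ where
  carrier := {T | ∀ (q : MvPolynomial (Fin n) K) (β : Fin n →₀ ℕ), k < β i →
    coeff β ((T.unop : Module.End K (MvPolynomial (Fin n) K)) q) = 0}
  add_mem' := by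
    intro a b ha hb q β hβ
    rw [MulOpposite.unop_add, Subalgebra.coe_add, LinearMap.add_apply, coeff_add,
      ha q β hβ, hb q β hβ, add_zero]
  zero_mem' := by
    intro q β hβ
    simp
  smul_mem' := by
    intro c T hT q β hβ
    rw [smul_eq_mul, MulOpposite.unop_mul, MulMemClass.coe_mul, Module.End.mul_apply]
    exact hT _ β hβ

end Aux

/-- For every `n ≥ 1`, the algebra `I_n` of polynomial integro-differential operators is
neither left nor right Noetherian. -/
theorem statement0 (K : Type*) [Field K] [CharZero K] (n : ℕ) (hn : 1 ≤ n) :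
    ¬ IsNoetherianRing (IDO K n) ∧ ¬ IsNoetherianRing (IDO K n)ᵐᵒᵖ := by
  set i : Fin n := ⟨0, hn⟩
  constructor
  · intro h
    have hN : IsNoetherian (IDO K n) (IDO K n) := isNoetherianRing_iff.mp h
    set f : ℕ →o Submodule (IDO K n) (IDO K n) :=
      ⟨fun k => Submodule.span (IDO K n) (Ejj K n i '' Set.Iic k),
        fun a b hab => Submodule.span_mono (Set.image_mono (Set.Iic_subset_Iic.mpr hab))⟩
    obtain ⟨N, hstab⟩ := monotone_stabilizes_iff_noetherian.mpr hN f
    set p : MvPolynomial (Fin n) K := monomial (Finsupp.single i (N + 1)) (1 : K)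
    have hle : f N ≤ lkiller p := by
      show Submodule.span _ _ ≤ _
      rw [Submodule.span_le]
      rintro _ ⟨j, hj, rfl⟩
      show ((Ejj K n i j : IDO K n) : Module.End K (MvPolynomial (Fin n) K)) p = 0
      rw [Ejj_monomial, if_neg]
      rw [Finsupp.single_eq_same]
      simp only [Set.mem_Iic] at hj
      omega
    have hmem : Ejj K n i (N + 1) ∈ f N := by
      rw [hstab (N + 1) (Nat.le_succ N)]
      exact Submodule.subset_span ⟨N + 1, Set.self_mem_Iic, rfl⟩
    have := hle hmem
    have hne : ((Ejj K n i (N + 1) : IDO K n) :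
        Module.End K (MvPolynomial (Fin n) K)) p ≠ 0 := by
      rw [Ejj_monomial, if_pos (Finsupp.single_eq_same)]
      intro hcontra
      exact (one_ne_zero : (1 : K) ≠ 0) (by simpa using congrArg (coeff (Finsupp.single i (N + 1))) hcontra)
    exact hne this
  · intro h
    have hN : IsNoetherian (IDO K n)ᵐᵒᵖ (IDO K n)ᵐᵒᵖ := isNoetherianRing_iff.mp h
    set f : ℕ →o Submodule (IDO K n)ᵐᵒᵖ (IDO K n)ᵐᵒᵖ :=
      ⟨fun k => Submodule.span (IDO K n)ᵐᵒᵖ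
        ((fun j => MulOpposite.op (Ejj K n i j)) '' Set.Iic k),
        fun a b hab => Submodule.span_mono (Set.image_mono (Set.Iic_subset_Iic.mpr hab))⟩
    obtain ⟨N, hstab⟩ := monotone_stabilizes_iff_noetherian.mpr hN f
    have hle : f N ≤ rkiller i N := by
      show Submodule.span _ _ ≤ _
      rw [Submodule.span_le]
      rintro _ ⟨j, hj, rfl⟩
      intro q β hβ
      rw [MulOpposite.unop_op]
      apply Ejj_coeff_eq_zero
      simp only [Set.mem_Iic] at hj
      omega
    have hmem : MulOpposite.op (Ejj K n i (N + 1)) ∈ f N := by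
      rw [hstab (N + 1) (Nat.le_succ N)]
      exact Submodule.subset_span ⟨N + 1, Set.self_mem_Iic, rfl⟩
    have := hle hmem (monomial (Finsupp.single i (N + 1)) (1 : K))
      (Finsupp.single i (N + 1)) (by rw [Finsupp.single_eq_same]; omega)
    rw [MulOpposite.unop_op, Ejj_monomial, if_pos (Finsupp.single_eq_same)] at this
    simp at this
end

section
/- The natural left I_n-module P_n is a simple and faithful I_n-module, and every faithful simple left I_n-module is isomorphic to P_n; thus P_n is, up to isomorphism, the only faithful simple I_n-module. -/
open MvPolynomial

/-- `P_n` is a module over `I_n` via the evaluation action of endomorphisms on polynomials. -/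
noncomputable instance instModuleIDO (K : Type*) [Field K] (n : ℕ) :
    Module (IDO K n) (MvPolynomial (Fin n) K) :=
  Module.compHom (MvPolynomial (Fin n) K) (Subalgebra.val (IDO K n)).toRingHom


/-!
`e = ∏ᵢ (1 - ∫ᵢ ∂ᵢ) ∈ I_n` is the projection `p ↦ p(0)` onto the constants. Partial derivatives
carry any nonzero polynomial to one with nonzero constant term, `e` then produces a nonzero
constant, and the multiplication operators in `I_n` produce all of `P_n` from it: `P_n` is simple.
Since `e` takes values in `K · 1`, `a • 1 = 0` forces `a * e = 0`. So for `m` with `e • m ≠ 0`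
(which exists in a faithful module) the map `a ↦ (a * e) • m` factors through
`I_n ⧸ ann(1) ≅ P_n`, a nonzero homomorphism `P_n → M`, hence an isomorphism when `M` is simple.
-/

open LinearMap in
theorem IsSimpleModule.nonempty_linearEquiv_of_mul_eq_zero {A P M : Type*} [Ring A]
    [AddCommGroup P] [Module A P] [AddCommGroup M] [Module A M]
    [IsSimpleModule A P] [IsSimpleModule A M] {v : P} {e : A}
    (he : ∀ a : A, a • v = 0 → a * e = 0) {m : M} (hm : e • m ≠ 0) :
    Nonempty (M ≃ₗ[A] P) := by
  have hv : v ≠ 0 := by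
    rintro rfl
    exact hm (by rw [← one_mul e, he 1 (smul_zero 1), zero_smul])
  let q := (toSpanSingleton A P v).quotKerEquivOfSurjective (toSpanSingleton_surjective A hv)
  let f := (ker (toSpanSingleton A P v)).liftQ (toSpanSingleton A M (e • m)) fun a ha => by
    simp [← mul_smul, he a ha]
  have hqv : q.symm v = Submodule.Quotient.mk 1 := q.symm_apply_eq.mpr (by simp [q])
  have hf : f ∘ₗ q.symm.toLinearMap ≠ 0 := fun h => hm <| by
    simpa [hqv, f] using congr($h v)
  exact ⟨(LinearEquiv.ofBijective _ (bijective_of_ne_zero hf)).symm⟩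

namespace IDO

variable {K : Type*} [Field K] {n : ℕ}

theorem smul_def (a : IDO K n) (p : MvPolynomial (Fin n) K) :
    a • p = (a : Module.End K (MvPolynomial (Fin n) K)) p :=
  rfl

theorem dOp_apply (i : Fin n) (p : MvPolynomial (Fin n) K) : dOp K n i p = pderiv i p :=
  rfl

theorem intOp_monomial (i : Fin n) (β : Fin n →₀ ℕ) (c : K) :
    intOp K n i (monomial β c) = ((β i : K) + 1)⁻¹ • monomial (β + Finsupp.single i 1) c := by
  have hβ : monomial β c = c • basisMonomials (Fin n) K β := by simp [smul_monomial]
  rw [hβ, map_smul, intOp, Module.Basis.constr_basis, smul_comm, smul_monomial, smul_eq_mul,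
    mul_one]

theorem one_sub_intOp_mul_dOp_monomial [CharZero K] (i : Fin n) (β : Fin n →₀ ℕ) (c : K) :
    (1 - intOp K n i * dOp K n i) (monomial β c) = if β i = 0 then monomial β c else 0 := by
  rw [LinearMap.sub_apply, Module.End.mul_apply, Module.End.one_apply, dOp_apply,
    pderiv_monomial, intOp_monomial]
  split_ifs with hβ
  · simp [hβ]
  · have hle : Finsupp.single i 1 ≤ β := Finsupp.single_le_iff.mpr (Nat.one_le_iff_ne_zero.mpr hβ)
    rw [tsub_add_cancel_of_le hle, smul_monomial, Finsupp.tsub_apply, Finsupp.single_eq_same,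
      Nat.cast_sub (Nat.one_le_iff_ne_zero.mpr hβ), Nat.cast_one, sub_add_cancel, smul_eq_mul,
      inv_mul_eq_div, mul_div_cancel_right₀ c (Nat.cast_ne_zero.mpr hβ), sub_self]

variable (K n) in
noncomputable def constOp : Module.End K (MvPolynomial (Fin n) K) :=
  Algebra.linearMap K (MvPolynomial (Fin n) K) ∘ₗ lcoeff K 0

@[simp]
theorem constOp_apply (p : MvPolynomial (Fin n) K) : constOp K n p = C (coeff 0 p) :=
  rfl

theorem list_prod_one_sub_intOp_mul_dOp_monomial [CharZero K] (l : List (Fin n))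
    (β : Fin n →₀ ℕ) (c : K) :
    (l.map fun i => 1 - intOp K n i * dOp K n i).prod (monomial β c) =
      if ∀ i ∈ l, β i = 0 then monomial β c else 0 := by
  induction l with
  | nil => simp
  | cons a l ih =>
    rw [List.map_cons, List.prod_cons, Module.End.mul_apply, ih]
    by_cases hl : ∀ i ∈ l, β i = 0
    · rw [if_pos hl, one_sub_intOp_mul_dOp_monomial]
      simp only [List.forall_mem_cons, and_iff_left hl]
    · simp [hl]

theorem constOp_eq_prod [CharZero K] :
    constOp K n = ((List.finRange n).map fun i => 1 - intOp K n i * dOp K n i).prod := by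
  refine linearMap_ext fun β => LinearMap.ext_ring ?_
  simp only [LinearMap.comp_apply, list_prod_one_sub_intOp_mul_dOp_monomial, constOp_apply,
    List.mem_finRange, forall_const]
  by_cases hβ : β = 0
  · simp [hβ]
  · have : ¬ ∀ i, β i = 0 := fun h => hβ (Finsupp.ext h)
    simp [hβ, this, coeff_monomial]

theorem constOp_mem [CharZero K] : constOp K n ∈ IDO K n := by
  rw [constOp_eq_prod]
  refine list_prod_mem fun f hf => ?_
  obtain ⟨i, -, rfl⟩ := List.mem_map.mp hf
  exact sub_mem (one_mem _) (mul_mem (intElt K n i).2 (dElt K n i).2)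

theorem mulLeft_mem (p : MvPolynomial (Fin n) K) : LinearMap.mulLeft K p ∈ IDO K n := by
  have hX : Algebra.adjoin K (Set.range X) ≤ (IDO K n).comap (Algebra.lmul K _) :=
    Algebra.adjoin_le (by rintro _ ⟨i, rfl⟩; exact (xElt K n i).2)
  exact hX (adjoin_range_X (R := K) ▸ Algebra.mem_top)

variable (K n) in
noncomputable def constElt [CharZero K] : IDO K n :=
  ⟨constOp K n, constOp_mem⟩

noncomputable def mulElt (p : MvPolynomial (Fin n) K) : IDO K n :=
  ⟨LinearMap.mulLeft K p, mulLeft_mem p⟩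

@[simp]
theorem constElt_smul [CharZero K] (p : MvPolynomial (Fin n) K) :
    constElt K n • p = C (coeff 0 p) :=
  rfl

@[simp]
theorem mulElt_smul (p q : MvPolynomial (Fin n) K) : mulElt p • q = p * q :=
  rfl

theorem submodule_eq_top_of_C_mem {N : Submodule (IDO K n) (MvPolynomial (Fin n) K)} {c : K}
    (hc : c ≠ 0) (hN : C c ∈ N) : N = ⊤ := by
  refine Submodule.eq_top_iff'.mpr fun p => ?_
  have hp : mulElt (C c⁻¹ * p) • C c = p := by
    rw [mulElt_smul, mul_right_comm, ← C_mul, inv_mul_cancel₀ hc, C_1, one_mul]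
  exact hp ▸ N.smul_mem _ hN

theorem submodule_eq_top_of_coeff_ne_zero [CharZero K]
    {N : Submodule (IDO K n) (MvPolynomial (Fin n) K)} {p : MvPolynomial (Fin n) K}
    (hp : p ∈ N) {α : Fin n →₀ ℕ} (hα : coeff α p ≠ 0) : N = ⊤ := by
  induction α using WellFoundedLT.induction generalizing p with
  | ind α ih =>
  by_cases h0 : α = 0
  · subst h0
    exact submodule_eq_top_of_C_mem hα (constElt_smul p ▸ N.smul_mem _ hp)
  obtain ⟨i, hi⟩ : ∃ i, α i ≠ 0 := not_forall.mp fun h => h0 (Finsupp.ext h)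
  have hle : Finsupp.single i 1 ≤ α := Finsupp.single_le_iff.mpr (Nat.one_le_iff_ne_zero.mpr hi)
  have hlt : α - Finsupp.single i 1 < α := by
    have hpos : 0 < Finsupp.single i 1 :=
      pos_iff_ne_zero.mpr (Finsupp.single_ne_zero.mpr one_ne_zero)
    exact (lt_add_of_pos_right _ hpos).trans_eq (tsub_add_cancel_of_le hle)
  refine ih _ hlt (N.smul_mem (dElt K n i) hp) ?_
  change coeff _ (pderiv i p) ≠ 0
  rw [coeff_pderiv, tsub_add_cancel_of_le hle]
  exact mul_ne_zero hα (Nat.cast_add_one_ne_zero _)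

instance isSimpleModule [CharZero K] : IsSimpleModule (IDO K n) (MvPolynomial (Fin n) K) := by
  have : IsSimpleOrder (Submodule (IDO K n) (MvPolynomial (Fin n) K)) := by
    refine ⟨fun N => or_iff_not_imp_left.mpr fun hN => ?_⟩
    obtain ⟨p, hpN, hp0⟩ := Submodule.exists_mem_ne_zero_of_ne_bot hN
    obtain ⟨α, hα⟩ := ne_zero_iff.mp hp0
    exact submodule_eq_top_of_coeff_ne_zero hpN hα
  exact ⟨⟩

instance faithfulSMul : FaithfulSMul (IDO K n) (MvPolynomial (Fin n) K) :=
  ⟨fun h => Subtype.ext (LinearMap.ext h)⟩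

theorem constElt_ne_zero [CharZero K] : constElt K n ≠ 0 := fun h =>
  one_ne_zero (α := MvPolynomial (Fin n) K) <| by
    simpa using congr($h • (1 : MvPolynomial (Fin n) K))

theorem mul_constElt_eq_zero_of_smul_one_eq_zero [CharZero K] {a : IDO K n}
    (ha : a • (1 : MvPolynomial (Fin n) K) = 0) : a * constElt K n = 0 := by
  refine Subtype.ext (LinearMap.ext fun p => ?_)
  rw [← smul_def, mul_smul, constElt_smul, C_eq_smul_one, smul_def, map_smul, ← smul_def, ha,
    smul_zero]
  rfl

end IDO

/-- The natural `I_n`-module `P_n` is simple and faithful, and every faithful simple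
`I_n`-module is isomorphic to `P_n`. -/
theorem statement6 (K : Type*) [Field K] [CharZero K] (n : ℕ) :
    IsSimpleModule (IDO K n) (MvPolynomial (Fin n) K) ∧
    FaithfulSMul (IDO K n) (MvPolynomial (Fin n) K) ∧
    ∀ (M : Type*) [AddCommGroup M] [Module (IDO K n) M],
      IsSimpleModule (IDO K n) M → FaithfulSMul (IDO K n) M →
      Nonempty (M ≃ₗ[IDO K n] MvPolynomial (Fin n) K) := by
  refine ⟨inferInstance, inferInstance, fun M _ _ _ hM => ?_⟩
  obtain ⟨m, hm⟩ : ∃ m : M, IDO.constElt K n • m ≠ 0 := by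
    by_contra! h
    exact IDO.constElt_ne_zero (hM.eq_of_smul_eq_smul fun m => by rw [h m, zero_smul])
  exact IsSimpleModule.nonempty_linearEquiv_of_mul_eq_zero (A := IDO K n) (v := 1)
    (fun _ => IDO.mul_constElt_eq_zero_of_smul_one_eq_zero) hm
end

section
/- The centre of the algebra I_n is K: an element z ∈ I_n commutes with all elements of I_n if and only if z = λ·1 for some λ ∈ K (i.e. the centre of I_n equals the bottom subalgebra K·1). -/
/-!
An element `z` commuting with every `X_i` is a `P_n`-linear map, i.e. multiplication by the
polynomial `q = z 1`. Commuting with `∂_i` as well, and applying both sides to `x_i`, gives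
`q = q + x_i ∂_i q`, so every `∂_i q` vanishes and, in characteristic zero, `q` is a constant.
-/

open MvPolynomial

namespace MvPolynomial

variable {σ R : Type*}

theorem eq_C_of_pderiv_eq_zero [CommSemiring R] [IsAddTorsionFree R] {q : MvPolynomial σ R}
    (h : ∀ i, pderiv i q = 0) : q = C (coeff 0 q) := by
  classical
  ext m
  rw [coeff_C]
  split_ifs with hm
  · rw [hm]
  obtain ⟨i, hi⟩ : ∃ i, m i ≠ 0 := by
    by_contra! h'
    exact hm (Finsupp.ext fun i => (h' i).symm)
  have hle : Finsupp.single i 1 ≤ m := Finsupp.single_le_iff.mpr (Nat.one_le_iff_ne_zero.mpr hi)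
  have key := coeff_pderiv (i := i) q (m - Finsupp.single i 1)
  rw [h i, coeff_zero, tsub_add_cancel_of_le hle, ← Nat.cast_add_one, mul_comm, ← nsmul_eq_mul]
    at key
  exact nsmul_right_injective (Nat.succ_ne_zero _) (key.symm.trans (smul_zero _).symm)

theorem apply_eq_mul_apply_one_of_commute_mulLeft_X [CommSemiring R]
    {z : Module.End R (MvPolynomial σ R)} (hX : ∀ i, Commute z (LinearMap.mulLeft R (X i)))
    (p : MvPolynomial σ R) : z p = p * z 1 := by
  induction p using MvPolynomial.induction_on with
  | C a => rw [C_eq_smul_one, map_smul, smul_mul_assoc, one_mul]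
  | add p q hp hq => rw [map_add, hp, hq, add_mul]
  | mul_X p i hp =>
    calc z (p * X i) = X i * z p := by rw [mul_comm]; exact LinearMap.congr_fun (hX i) p
      _ = p * X i * z 1 := by rw [hp]; ring

theorem exists_eq_algebraMap_of_commute_mulLeft_X_of_commute_pderiv [CommRing R]
    [IsAddTorsionFree R] {z : Module.End R (MvPolynomial σ R)}
    (hX : ∀ i, Commute z (LinearMap.mulLeft R (X i)))
    (hD : ∀ i, Commute z (pderiv i).toLinearMap) :
    ∃ c : R, z = algebraMap R (Module.End R (MvPolynomial σ R)) c := by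
  have hz := apply_eq_mul_apply_one_of_commute_mulLeft_X hX
  have hpderiv : ∀ i, pderiv i (z 1) = 0 := by
    intro i
    have h : z (pderiv i (X i)) = pderiv i (z (X i)) := LinearMap.congr_fun (hD i) (X i)
    rw [pderiv_X_self, hz (X i), pderiv_mul, pderiv_X_self, one_mul, left_eq_add] at h
    exact isRegular_X.left.eq_iff.mp (h.trans (mul_zero _).symm)
  set c := coeff 0 (z 1)
  have hc : z 1 = C c := eq_C_of_pderiv_eq_zero hpderiv
  refine ⟨c, LinearMap.ext fun p => ?_⟩
  rw [hz p, hc, Module.algebraMap_end_apply, smul_eq_C_mul, mul_comm]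

end MvPolynomial

/-- The centre of the algebra `I_n` is `K`: an element of `I_n` commutes with all elements
of `I_n` if and only if it is a scalar `λ·1` with `λ ∈ K`. -/
theorem statement7 (K : Type*) [Field K] [CharZero K] (n : ℕ) :
    ∀ z : IDO K n, (∀ w : IDO K n, z * w = w * z) ↔
      ∃ lam : K, z = algebraMap K (IDO K n) lam := by
  intro z
  refine ⟨fun hz => ?_, ?_⟩
  · obtain ⟨lam, hlam⟩ := exists_eq_algebraMap_of_commute_mulLeft_X_of_commute_pderiv (z := z.val)
      (fun i => congrArg Subtype.val (hz (xElt K n i)))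
      (fun i => congrArg Subtype.val (hz (dElt K n i)))
    exact ⟨lam, Subtype.ext hlam⟩
  · rintro ⟨lam, rfl⟩ w
    exact Algebra.commutes lam w
end

section
/- Let C be any one of the following three subalgebras of I_n: the subalgebra generated by {X_1,…,X_n}, the subalgebra generated by {∂_1,…,∂_n}, or the subalgebra generated by {∫_1,…,∫_n}. Then the centralizer of C in I_n equals C; in particular each of these three subalgebras is a maximal commutative subalgebra of I_n. -/
open MvPolynomial

/-! The algebras generated by the `X_i` and by the `∫_i` are commutative and have the cyclic
vector `1`: every polynomial is `c 1` for some `c` in them. So an operator `a` commuting with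
such an algebra equals its element `b` with `b 1 = a 1`, because `a (c 1) = c (a 1) = c (b 1) =
b (c 1)`. The `∂_i` kill `1`; instead, an operator commuting with them is determined by the
functional `p ↦ (a p)(0)`. An element of `I_n` lowers exponents by a bounded amount, so this
functional vanishes on `x^α` for large `α`, and then `a = ∑_β (a x^β)(0) ∂^β / β!` is a finite
sum. -/

section Centralizer

variable {R A : Type*} [CommSemiring R] [Semiring A] [Algebra R A]

theorem commute_of_mem_adjoin_of_pairwise_commute {s : Set A}
    (hs : ∀ x ∈ s, ∀ y ∈ s, Commute x y) {a b : A}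
    (ha : a ∈ Algebra.adjoin R s) (hb : b ∈ Algebra.adjoin R s) : Commute a b :=
  Algebra.commute_of_mem_adjoin_of_forall_mem_commute hb fun y hy =>
    (Algebra.commute_of_mem_adjoin_of_forall_mem_commute ha fun x hx => hs y hy x hx).symm

theorem and_forall_commute_iff_mem_adjoin {s : Set A} {T : Subalgebra R A} (hsT : s ⊆ T)
    (hs : ∀ x ∈ s, ∀ y ∈ s, Commute x y)
    (hmax : ∀ a ∈ T, (∀ x ∈ s, Commute a x) → a ∈ Algebra.adjoin R s) (a : A) :
    (a ∈ T ∧ ∀ c ∈ Algebra.adjoin R s, a * c = c * a) ↔ a ∈ Algebra.adjoin R s :=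
  ⟨fun ⟨haT, ha⟩ => hmax a haT fun x hx => ha x (Algebra.subset_adjoin hx),
    fun ha => ⟨Algebra.adjoin_le hsT ha,
      fun _ hc => (commute_of_mem_adjoin_of_pairwise_commute hs ha hc).eq⟩⟩

theorem mem_adjoin_of_forall_commute_of_cyclic {M : Type*} [AddCommMonoid M] [Module R M]
    {s : Set (Module.End R M)} (hs : ∀ x ∈ s, ∀ y ∈ s, Commute x y) {m : M}
    (hm : ∀ q, ∃ c ∈ Algebra.adjoin R s, c m = q) {a : Module.End R M}
    (ha : ∀ x ∈ s, Commute a x) : a ∈ Algebra.adjoin R s := by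
  obtain ⟨b, hb, hbm⟩ := hm (a m)
  suffices a = b from this ▸ hb
  ext q
  obtain ⟨c, hc, rfl⟩ := hm q
  calc a (c m) = c (a m) :=
        LinearMap.congr_fun (Algebra.commute_of_mem_adjoin_of_forall_mem_commute hc ha).eq m
    _ = b (c m) := by
        rw [← hbm]
        exact LinearMap.congr_fun (commute_of_mem_adjoin_of_pairwise_commute hs hc hb).eq m

end Centralizer

theorem Finsupp.induction_add_single_one {σ : Type*} {motive : (σ →₀ ℕ) → Prop}
    (zero : motive 0) (add_single : ∀ α i, motive α → motive (α + single i 1)) (α : σ →₀ ℕ) :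
    motive α := by
  induction α using Finsupp.induction with
  | zero => exact zero
  | single_add i k α hi hk ih =>
    clear hi hk
    rw [add_comm]
    induction k with
    | zero => simpa using ih
    | succ k ihk => simpa [add_assoc, ← single_add] using add_single _ i ihk

section Banded

variable {σ R : Type*} [CommSemiring R]

def Banded (N : ℕ) (a : Module.End R (MvPolynomial σ R)) : Prop :=
  ∀ α γ, coeff γ (a (monomial α 1)) ≠ 0 → ∀ i, α i ≤ γ i + N

theorem Banded.of_apply_monomial {N : ℕ} {a : Module.End R (MvPolynomial σ R)}
    (f : (σ →₀ ℕ) → σ →₀ ℕ) (c : (σ →₀ ℕ) → R)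
    (ha : ∀ α, a (monomial α 1) = monomial (f α) (c α)) (hf : ∀ α i, α i ≤ f α i + N) :
    Banded N a := by
  classical
  intro α γ hne i
  rw [ha, coeff_monomial] at hne
  split_ifs at hne with h
  · exact h ▸ hf α i
  · exact absurd rfl hne

theorem Banded.exists_mem_support {N : ℕ} {a : Module.End R (MvPolynomial σ R)}
    (ha : Banded N a) {p : MvPolynomial σ R} {γ : σ →₀ ℕ} (hγ : coeff γ (a p) ≠ 0) :
    ∃ δ ∈ p.support, ∀ i, δ i ≤ γ i + N := by
  conv at hγ => rw [p.as_sum, map_sum, coeff_sum]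
  obtain ⟨δ, hδ, hne⟩ := Finset.exists_ne_zero_of_sum_ne_zero hγ
  rw [← mul_one (coeff δ p), ← smul_eq_mul, ← smul_monomial, map_smul, coeff_smul] at hne
  exact ⟨δ, hδ, ha δ γ (right_ne_zero_of_mul hne)⟩

theorem Banded.mul {N₁ N₂ : ℕ} {a b : Module.End R (MvPolynomial σ R)}
    (ha : Banded N₁ a) (hb : Banded N₂ b) : Banded (N₁ + N₂) (a * b) := by
  intro α γ hne i
  obtain ⟨δ, hδ, hδγ⟩ := ha.exists_mem_support hne
  have hαδ := hb α δ (mem_support_iff.mp hδ) i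
  have := hδγ i
  omega

theorem Banded.add {N₁ N₂ : ℕ} {a b : Module.End R (MvPolynomial σ R)}
    (ha : Banded N₁ a) (hb : Banded N₂ b) : Banded (max N₁ N₂) (a + b) := by
  intro α γ hne i
  rw [LinearMap.add_apply, coeff_add] at hne
  by_cases h : coeff γ (a (monomial α 1)) = 0
  · have := hb α γ (by simpa [h] using hne) i
    omega
  · have := ha α γ h i
    omega

theorem banded_algebraMap (r : R) :
    Banded 0 (algebraMap R (Module.End R (MvPolynomial σ R)) r) :=
  .of_apply_monomial id (fun _ => r)
    (fun α => by rw [Module.algebraMap_end_apply, smul_monomial, smul_eq_mul, mul_one]; rfl)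
    (fun _ _ => le_rfl)

end Banded

section Operators

variable {K : Type*} [Field K] {n : ℕ}

theorem intOp_monomial (i : Fin n) (α : Fin n →₀ ℕ) (c : K) :
    intOp K n i (monomial α c) = monomial (α + Finsupp.single i 1) ((α i + 1 : K)⁻¹ * c) := by
  have h1 : monomial α c = c • basisMonomials (Fin n) K α := by
    rw [coe_basisMonomials, smul_monomial, smul_eq_mul, mul_one]
  rw [h1, map_smul, intOp, Module.Basis.constr_basis, smul_smul, smul_monomial, smul_eq_mul,
    mul_one, mul_comm]

theorem dOp_apply (i : Fin n) (p : MvPolynomial (Fin n) K) : dOp K n i p = pderiv i p := rfl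

theorem range_xOp_pairwise_commute :
    ∀ x ∈ Set.range (xOp K n), ∀ y ∈ Set.range (xOp K n), Commute x y := by
  rintro _ ⟨i, rfl⟩ _ ⟨j, rfl⟩
  rw [Commute, SemiconjBy, xOp, xOp, Module.End.mul_eq_comp, Module.End.mul_eq_comp,
    ← LinearMap.mulLeft_mul, ← LinearMap.mulLeft_mul, mul_comm]

theorem range_dOp_pairwise_commute :
    ∀ x ∈ Set.range (dOp K n), ∀ y ∈ Set.range (dOp K n), Commute x y := by
  rintro _ ⟨i, rfl⟩ _ ⟨j, rfl⟩
  classical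
  refine LinearMap.ext fun p => MvPolynomial.ext _ _ fun m => ?_
  simp only [Module.End.mul_apply, dOp_apply, coeff_pderiv, Finsupp.add_apply,
    Finsupp.single_apply, add_right_comm m]
  rcases eq_or_ne i j with rfl | hij
  · rfl
  · simp [hij, hij.symm]
    ring

theorem range_intOp_pairwise_commute :
    ∀ x ∈ Set.range (intOp K n), ∀ y ∈ Set.range (intOp K n), Commute x y := by
  rintro _ ⟨i, rfl⟩ _ ⟨j, rfl⟩
  classical
  refine (basisMonomials (Fin n) K).ext fun α => ?_
  simp only [coe_basisMonomials, Module.End.mul_apply, intOp_monomial, Finsupp.add_apply,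
    Finsupp.single_apply, add_right_comm α]
  rcases eq_or_ne i j with rfl | hij
  · rfl
  · simp [hij, hij.symm]
    rw [mul_comm]

theorem banded_of_mem_IDO {a : Module.End K (MvPolynomial (Fin n) K)} (ha : a ∈ IDO K n) :
    ∃ N, Banded N a := by
  classical
  induction ha using Algebra.adjoin_induction with
  | mem x hx =>
    rcases hx with (⟨i, rfl⟩ | ⟨i, rfl⟩) | ⟨i, rfl⟩
    · refine ⟨0, .of_apply_monomial (fun α => Finsupp.single i 1 + α) (fun _ => 1)
        (fun α => ?_) (fun _ _ => by simp)⟩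
      rw [xOp, LinearMap.mulLeft_apply, X, monomial_mul, one_mul]
    · refine ⟨1, .of_apply_monomial (fun α => α - Finsupp.single i 1) (fun α => 1 * α i)
        (fun α => by rw [dOp_apply, pderiv_monomial]) (fun α j => ?_)⟩
      simp only [Finsupp.tsub_apply, Finsupp.single_apply]
      split_ifs <;> omega
    · exact ⟨0, .of_apply_monomial (fun α => α + Finsupp.single i 1) _
        (fun α => intOp_monomial i α 1) (fun _ _ => by simp)⟩
  | algebraMap r => exact ⟨0, banded_algebraMap r⟩
  | add x y _ _ hx hy =>
    obtain ⟨N₁, hx⟩ := hx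
    obtain ⟨N₂, hy⟩ := hy
    exact ⟨_, hx.add hy⟩
  | mul x y _ _ hx hy =>
    obtain ⟨N₁, hx⟩ := hx
    obtain ⟨N₂, hy⟩ := hy
    exact ⟨_, hx.mul hy⟩

end Operators

section Multiplication

variable {K : Type*} [Field K] {n : ℕ}

theorem mulLeft_mem_adjoin_xOp (q : MvPolynomial (Fin n) K) :
    LinearMap.mulLeft K q ∈ Algebra.adjoin K (Set.range (xOp K n)) := by
  have hq : Algebra.lmul K _ q ∈ (Algebra.adjoin K (Set.range X)).map (Algebra.lmul K _) := by
    rw [adjoin_range_X]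
    exact Subalgebra.mem_map.mpr ⟨q, Algebra.mem_top, rfl⟩
  rwa [AlgHom.map_adjoin, ← Set.range_comp] at hq

theorem mem_adjoin_xOp_of_forall_commute {a : Module.End K (MvPolynomial (Fin n) K)}
    (ha : ∀ x ∈ Set.range (xOp K n), Commute a x) :
    a ∈ Algebra.adjoin K (Set.range (xOp K n)) :=
  mem_adjoin_of_forall_commute_of_cyclic range_xOp_pairwise_commute
    (fun q => ⟨_, mulLeft_mem_adjoin_xOp q, mul_one q⟩) ha

end Multiplication

section Integration

variable {K : Type*} [Field K] [CharZero K] {n : ℕ}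

theorem exists_mem_adjoin_intOp_apply_one (q : MvPolynomial (Fin n) K) :
    ∃ c ∈ Algebra.adjoin K (Set.range (intOp K n)), c 1 = q := by
  induction q using MvPolynomial.induction_on' with
  | add p q hp hq =>
    obtain ⟨c₁, hc₁, rfl⟩ := hp
    obtain ⟨c₂, hc₂, rfl⟩ := hq
    exact ⟨c₁ + c₂, add_mem hc₁ hc₂, rfl⟩
  | monomial α r =>
    induction α using Finsupp.induction_add_single_one generalizing r with
    | zero => exact ⟨algebraMap K _ r, Subalgebra.algebraMap_mem _ r, by simp [smul_eq_C_mul]⟩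
    | add_single α i ih =>
      obtain ⟨c, hc, hc1⟩ := ih ((α i + 1 : K) * r)
      refine ⟨intOp K n i * c, mul_mem (Algebra.subset_adjoin ⟨i, rfl⟩) hc, ?_⟩
      rw [Module.End.mul_apply, hc1, intOp_monomial, inv_mul_cancel_left₀ (by exact_mod_cast
        (α i).succ_ne_zero)]

theorem mem_adjoin_intOp_of_forall_commute {a : Module.End K (MvPolynomial (Fin n) K)}
    (ha : ∀ x ∈ Set.range (intOp K n), Commute a x) :
    a ∈ Algebra.adjoin K (Set.range (intOp K n)) :=
  mem_adjoin_of_forall_commute_of_cyclic range_intOp_pairwise_commute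
    exists_mem_adjoin_intOp_apply_one ha

end Integration

section Derivation

variable {K : Type*} [Field K] [CharZero K] {n : ℕ}

/-- The witness is `∂^β / β!`. -/
theorem exists_mem_adjoin_dOp_coeff_zero_apply (β : Fin n →₀ ℕ) :
    ∃ D ∈ Algebra.adjoin K (Set.range (dOp K n)), ∀ p, coeff 0 (D p) = coeff β p := by
  induction β using Finsupp.induction_add_single_one with
  | zero => exact ⟨1, one_mem _, fun p => rfl⟩
  | add_single β i ih =>
    obtain ⟨D, hD, hDp⟩ := ih
    refine ⟨(β i + 1 : K)⁻¹ • (D * dOp K n i),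
      Subalgebra.smul_mem _ (mul_mem hD (Algebra.subset_adjoin ⟨i, rfl⟩)) _, fun p => ?_⟩
    rw [LinearMap.smul_apply, Module.End.mul_apply, coeff_smul, hDp, dOp_apply, coeff_pderiv,
      smul_eq_mul, mul_comm, mul_assoc,
      mul_inv_cancel₀ (by exact_mod_cast (β i).succ_ne_zero), mul_one]

/-- `coeff γ (a p) = coeff 0 (∂^γ (a p)) / γ! = coeff 0 (a (∂^γ p)) / γ!`. -/
theorem eq_of_forall_commute_dOp_of_coeff_zero_apply_eq
    {a b : Module.End K (MvPolynomial (Fin n) K)}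
    (ha : ∀ x ∈ Set.range (dOp K n), Commute a x) (hb : ∀ x ∈ Set.range (dOp K n), Commute b x)
    (hab : ∀ α, coeff 0 (a (monomial α 1)) = coeff 0 (b (monomial α 1))) : a = b := by
  have hcoeff : ∀ p, coeff 0 (a p) = coeff 0 (b p) := by
    intro p
    induction p using MvPolynomial.induction_on' with
    | monomial α r =>
      rw [← mul_one r, ← smul_eq_mul, ← smul_monomial, map_smul, map_smul, coeff_smul,
        coeff_smul, hab]
    | add p q hp hq => rw [map_add, map_add, coeff_add, coeff_add, hp, hq]
  refine LinearMap.ext fun p => MvPolynomial.ext _ _ fun γ => ?_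
  obtain ⟨D, hD, hDp⟩ := exists_mem_adjoin_dOp_coeff_zero_apply (K := K) γ
  have hcomm {c} (hc : ∀ x ∈ Set.range (dOp K n), Commute c x) (p) : D (c p) = c (D p) :=
    LinearMap.congr_fun (Algebra.commute_of_mem_adjoin_of_forall_mem_commute hD hc).eq.symm p
  rw [← hDp, ← hDp, hcomm ha, hcomm hb, hcoeff]

theorem mem_adjoin_dOp_of_forall_commute {a : Module.End K (MvPolynomial (Fin n) K)}
    (haI : a ∈ IDO K n) (ha : ∀ x ∈ Set.range (dOp K n), Commute a x) :
    a ∈ Algebra.adjoin K (Set.range (dOp K n)) := by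
  classical
  obtain ⟨N, hN⟩ := banded_of_mem_IDO haI
  choose D hD hDp using exists_mem_adjoin_dOp_coeff_zero_apply (K := K) (n := n)
  set φ : (Fin n →₀ ℕ) → K := fun α => coeff 0 (a (monomial α 1))
  set box : Finset (Fin n →₀ ℕ) := Finset.Iic (Finsupp.equivFunOnFinite.symm fun _ => N)
  have hφ : ∀ α ∉ box, φ α = 0 := by
    intro α hα
    by_contra hne
    exact hα (Finset.mem_Iic.mpr fun i => by simpa using hN α 0 hne i)
  have hb : ∑ β ∈ box, φ β • D β ∈ Algebra.adjoin K (Set.range (dOp K n)) :=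
    Subalgebra.sum_mem _ fun β _ => Subalgebra.smul_mem _ (hD β) _
  convert hb
  refine eq_of_forall_commute_dOp_of_coeff_zero_apply_eq ha
    (fun x hx => commute_of_mem_adjoin_of_pairwise_commute range_dOp_pairwise_commute hb
      (Algebra.subset_adjoin hx))
    fun α => ?_
  simp only [LinearMap.sum_apply, LinearMap.smul_apply, coeff_sum, coeff_smul,
    hDp, coeff_monomial, smul_eq_mul, mul_ite, mul_one, mul_zero, Finset.sum_ite_eq]
  split_ifs with h
  · rfl
  · exact hφ α h

end Derivation

/-- For `C` any of the subalgebras generated by `{X_1,…,X_n}`, by `{∂_1,…,∂_n}`, or by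
`{∫_1,…,∫_n}`, the centralizer of `C` in `I_n` equals `C` (in particular each of these is a
maximal commutative subalgebra of `I_n`). -/
theorem statement8 (K : Type*) [Field K] [CharZero K] (n : ℕ) :
    (∀ a : Module.End K (MvPolynomial (Fin n) K),
      (a ∈ IDO K n ∧ ∀ c ∈ Algebra.adjoin K (Set.range (xOp K n)), a * c = c * a) ↔
        a ∈ Algebra.adjoin K (Set.range (xOp K n))) ∧
    (∀ a : Module.End K (MvPolynomial (Fin n) K),
      (a ∈ IDO K n ∧ ∀ c ∈ Algebra.adjoin K (Set.range (dOp K n)), a * c = c * a) ↔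
        a ∈ Algebra.adjoin K (Set.range (dOp K n))) ∧
    (∀ a : Module.End K (MvPolynomial (Fin n) K),
      (a ∈ IDO K n ∧ ∀ c ∈ Algebra.adjoin K (Set.range (intOp K n)), a * c = c * a) ↔
        a ∈ Algebra.adjoin K (Set.range (intOp K n))) :=
  ⟨and_forall_commute_iff_mem_adjoin (fun _ hx => Algebra.subset_adjoin (.inl (.inl hx)))
      range_xOp_pairwise_commute fun _ _ => mem_adjoin_xOp_of_forall_commute,
    and_forall_commute_iff_mem_adjoin (fun _ hx => Algebra.subset_adjoin (.inl (.inr hx)))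
      range_dOp_pairwise_commute fun _ => mem_adjoin_dOp_of_forall_commute,
    and_forall_commute_iff_mem_adjoin (fun _ hx => Algebra.subset_adjoin (.inr hx))
      range_intOp_pairwise_commute fun _ _ => mem_adjoin_intOp_of_forall_commute⟩
end
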